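/- arXiv:1808.05923 — 2 statements merged into one kernel-verified Lean document; each statement's English description precedes it below -/
import Mathlib

section
/- Let n ≥ 1, n1 ≥ 2, m ≥ 1, r ≥ 0, let d0 ∈ U(n; 3^m), d1 ∈ U(n1; 3^m) (i.e., m1 = 0, m2 = m), let d2 be a column-balanced n1×r matrix with entries in {1,2}, and let D3 be the corresponding column augmented design. Then WD(D3) ≥ LBW3_3 = C(r) + (n²/(n+n1)²)·(3/2)^r·WD(d0) + (1/(n+n1)²)·(23/18)^{m+r}·( p2·(27/23)^{w2} + q2·(27/23)^{w2+1} + 2·( p3·(27/23)^{w3} + q3·(27/23)^{w3+1} ) ). Equality holds if and only if among the n1(n1−1) ordered pairs of distinct follow-up rows exactly p2 of them satisfy V_{ij}+T_{ij} = w2 and exactly q2 of them satisfy V_{ij}+T_{ij} = w2+1, and among the n·n1 pairs (i,j) with i an initial row and j a follow-up row exactly p3 of them satisfy V_{ij} = w3 and exactly q3 of them satisfy V_{ij} = w3+1. -/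
open Finset

noncomputable section

namespace CAUD

/-- The mapped point value `u = (2x+1)/(2q)`. -/
def uVal (q x : ℕ) : ℝ := (2 * (x : ℝ) + 1) / (2 * (q : ℝ))

/-- The squared wrap-around L2-discrepancy of an `N × M` design whose `k`-th
column takes values in `{0, …, q k - 1}`. -/
def WD {N M : ℕ} (q : Fin M → ℕ) (x : Fin N → Fin M → ℕ) : ℝ :=
  -((4 : ℝ) / 3) ^ M + (1 / (N : ℝ) ^ 2) *
    ∑ i : Fin N, ∑ j : Fin N, ∏ k : Fin M,
      ((3 : ℝ) / 2 - |uVal (q k) (x i k) - uVal (q k) (x j k)| *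
        (1 - |uVal (q k) (x i k) - uVal (q k) (x j k)|))

/-- A mixed-level U-type design in `U(N; 2^{m1} 3^{m2})`: the first `m1` columns are
two-level and balanced, the last `m2` columns are three-level and balanced. -/
def IsUType (N m1 m2 : ℕ) (d : Fin N → Fin (m1 + m2) → ℕ) : Prop :=
  ∀ k : Fin (m1 + m2),
    if (k : ℕ) < m1 then
      (∀ i, d i k < 2) ∧ ∀ v < 2, 2 * (univ.filter (fun i => d i k = v)).card = N
    else
      (∀ i, d i k < 3) ∧ ∀ v < 3, 3 * (univ.filter (fun i => d i k = v)).card = N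

/-- A column-balanced `n1 × r` matrix with entries in `{1, 2}`: every column has
exactly `n1/2` entries equal to 1 and `n1/2` entries equal to 2. -/
def IsBalanced (n1 r : ℕ) (d2 : Fin n1 → Fin r → ℕ) : Prop :=
  (∀ i k, d2 i k = 1 ∨ d2 i k = 2) ∧
  ∀ k, 2 * (univ.filter (fun i => d2 i k = 1)).card = n1 ∧
       2 * (univ.filter (fun i => d2 i k = 2)).card = n1

/-- The column augmented design: first `n` rows are `(d0, 0)`, last `n1` rows `(d1, d2)`. -/
def augDesign (n n1 m r : ℕ) (d0 : Fin n → Fin m → ℕ) (d1 : Fin n1 → Fin m → ℕ)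
    (d2 : Fin n1 → Fin r → ℕ) : Fin (n + n1) → Fin (m + r) → ℕ := fun i k =>
  if hi : (i : ℕ) < n then
    if hk : (k : ℕ) < m then d0 ⟨i, hi⟩ ⟨k, hk⟩ else 0
  else
    if hk : (k : ℕ) < m then d1 ⟨(i : ℕ) - n, by have := i.isLt; omega⟩ ⟨k, hk⟩
    else d2 ⟨(i : ℕ) - n, by have := i.isLt; omega⟩ ⟨(k : ℕ) - m, by have := k.isLt; omega⟩

/-- Append one blocking column: 0 on the initial rows, 1 on the follow-up rows. -/
def appendOne (n n1 M : ℕ) (D : Fin (n + n1) → Fin M → ℕ) :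
    Fin (n + n1) → Fin (M + 1) → ℕ := fun i k =>
  if hk : (k : ℕ) < M then D i ⟨k, hk⟩ else if (i : ℕ) < n then 0 else 1

/-- Append two blocking columns: the first is 0 on the initial rows and 1 on the
follow-up rows; the second is 0 on the initial rows and the first `n1/2` follow-up
rows, and 1 on the remaining follow-up rows. -/
def appendTwo (n n1 M : ℕ) (D : Fin (n + n1) → Fin M → ℕ) :
    Fin (n + n1) → Fin (M + 2) → ℕ := fun i k =>
  if hk : (k : ℕ) < M then D i ⟨k, hk⟩
  else if (k : ℕ) = M then (if (i : ℕ) < n then 0 else 1)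
  else (if (i : ℕ) < n + n1 / 2 then 0 else 1)

/-- Level sizes of the (possibly blocking-augmented) column augmented design:
first `m1` columns are two-level, the next `m2 + r` are three-level, anything
after that (blocking columns) is two-level. -/
def qfun (m1 m2 r k : ℕ) : ℕ :=
  if k < m1 then 2 else if k < m1 + m2 + r then 3 else 2

/-- Coincidence number among the first `m1` columns. -/
def Fco {N M : ℕ} (m1 : ℕ) (D : Fin N → Fin M → ℕ) (i j : Fin N) : ℕ :=
  (univ.filter (fun k : Fin M => (k : ℕ) < m1 ∧ D i k = D j k)).card

/-- Coincidence number among columns `m1, …, m1 + m2 - 1`. -/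
def Vco {N M : ℕ} (m1 m2 : ℕ) (D : Fin N → Fin M → ℕ) (i j : Fin N) : ℕ :=
  (univ.filter (fun k : Fin M => m1 ≤ (k : ℕ) ∧ (k : ℕ) < m1 + m2 ∧ D i k = D j k)).card

/-- Coincidence number among the columns `≥ m`, counting agreements with common
value in `{1, 2}`. -/
def Tco {N M : ℕ} (m : ℕ) (D : Fin N → Fin M → ℕ) (i j : Fin N) : ℕ :=
  (univ.filter (fun k : Fin M =>
    m ≤ (k : ℕ) ∧ D i k = D j k ∧ (D i k = 1 ∨ D i k = 2))).card

/-- Total coincidence number between two rows. -/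
def lam {N M : ℕ} (D : Fin N → Fin M → ℕ) (i j : Fin N) : ℕ :=
  (univ.filter (fun k : Fin M => D i k = D j k)).card

/-- Number of rows whose `k`-th entry is `u` and whose `l`-th entry is `v`. -/
def nuv {N M : ℕ} (d : Fin N → Fin M → ℕ) (k l : Fin M) (u v : ℕ) : ℕ :=
  (univ.filter (fun i : Fin N => d i k = u ∧ d i l = v)).card

/-- Non-orthogonality of a pair of columns. -/
def fNOD {N M : ℕ} (q : Fin M → ℕ) (d : Fin N → Fin M → ℕ) (k l : Fin M) : ℝ :=
  ∑ u ∈ Finset.range (q k), ∑ v ∈ Finset.range (q l),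
    ((nuv d k l u v : ℝ) - (N : ℝ) / ((q k : ℝ) * (q l : ℝ))) ^ 2

/-- The `E(f_NOD)` criterion: average non-orthogonality over all pairs of columns. -/
def EfNOD {N M : ℕ} (q : Fin M → ℕ) (d : Fin N → Fin M → ℕ) : ℝ :=
  (∑ k : Fin M, ∑ l : Fin M, if (k : ℕ) < (l : ℕ) then fNOD q d k l else 0) /
    (Nat.choose M 2 : ℝ)

/-- Stacking the stage designs `d 0, …, d (l-1)` on top of one another. -/
def stack (M : ℕ) (ns : ℕ → ℕ) (d : (j : ℕ) → Fin (ns j) → Fin M → ℕ) :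
    (l : ℕ) → Fin (∑ j ∈ Finset.range l, ns j) → Fin M → ℕ
  | 0 => fun _ _ => 0
  | l + 1 => fun i =>
    let i' : Fin ((∑ j ∈ Finset.range l, ns j) + ns l) :=
      Fin.cast (Finset.sum_range_succ ns l) i
    if h : (i' : ℕ) < ∑ j ∈ Finset.range l, ns j then
      stack M ns d l ⟨(i' : ℕ), h⟩
    else d l ⟨(i' : ℕ) - ∑ j ∈ Finset.range l, ns j, by have := i'.isLt; omega⟩

def aa : ℝ := Real.log (6 / 5)

def bb : ℝ := Real.log (27 / 23)

/-- The constant `C(s)`. -/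
def Cconst (n n1 m s : ℕ) : ℝ :=
  -(((4 : ℝ) / 3) ^ s - ((n : ℝ) ^ 2 / ((n : ℝ) + n1) ^ 2) * ((3 : ℝ) / 2) ^ s) * ((4 : ℝ) / 3) ^ m
  + ((n1 : ℝ) / ((n : ℝ) + n1) ^ 2) * ((3 : ℝ) / 2) ^ (m + s)

def phi1 (n1 m1 m2 r : ℕ) : ℝ :=
  aa * m1 * ((n1 : ℝ) - 2) / (2 * ((n1 : ℝ) - 1)) + bb * m2 * ((n1 : ℝ) - 3) / (3 * ((n1 : ℝ) - 1))
  + bb * r * ((n1 : ℝ) - 2) / (2 * ((n1 : ℝ) - 1))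

def phi2 (m1 m2 : ℕ) : ℝ := aa * m1 / 2 + bb * m2 / 3

def T1c (n1 m1 m2 r : ℕ) : ℝ := (n1 : ℝ) * ((n1 : ℝ) - 1) * Real.exp (phi1 n1 m1 m2 r)

def T2c (n n1 m1 m2 : ℕ) : ℝ := (n : ℝ) * (n1 : ℝ) * Real.exp (phi2 m1 m2)

/-- Lower bound `LBW3` (mixed-level case, Theorem 1). -/
def LBW3 (n n1 m1 m2 r : ℕ) (wd0 : ℝ) : ℝ :=
  Cconst n n1 (m1 + m2) r + ((n : ℝ) ^ 2 / ((n : ℝ) + n1) ^ 2) * ((3 : ℝ) / 2) ^ r * wd0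
  + (1 / ((n : ℝ) + n1) ^ 2) * ((5 : ℝ) / 4) ^ m1 * ((23 : ℝ) / 18) ^ (m2 + r) *
      (T1c n1 m1 m2 r + 2 * T2c n n1 m1 m2)

def phi1p (n1 m r : ℕ) : ℝ :=
  aa * m * ((n1 : ℝ) - 2) / (2 * ((n1 : ℝ) - 1)) + bb * r * ((n1 : ℝ) - 2) / (2 * ((n1 : ℝ) - 1))

def T1pc (n1 m r : ℕ) : ℝ := (n1 : ℝ) * ((n1 : ℝ) - 1) * Real.exp (phi1p n1 m r)

def w1 (m : ℕ) : ℕ := m / 2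

def q1c (n n1 m : ℕ) : ℝ := (m : ℝ) * n * n1 / 2 - (n : ℝ) * n1 * (w1 m : ℝ)

def p1c (n n1 m : ℕ) : ℝ := (n : ℝ) * n1 - q1c n n1 m

/-- Lower bound `LBW3` for a two-level initial design (Theorem 2). -/
def LBW32 (n n1 m r : ℕ) (wd0 : ℝ) : ℝ :=
  Cconst n n1 m r + ((n : ℝ) ^ 2 / ((n : ℝ) + n1) ^ 2) * ((3 : ℝ) / 2) ^ r * wd0
  + (1 / ((n : ℝ) + n1) ^ 2) * ((5 : ℝ) / 4) ^ m * ((23 : ℝ) / 18) ^ r *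
      (T1pc n1 m r + 2 * (p1c n n1 m * ((6 : ℝ) / 5) ^ w1 m + q1c n n1 m * ((6 : ℝ) / 5) ^ (w1 m + 1)))

def w2 (n1 m r : ℕ) : ℤ :=
  ⌊(m : ℝ) * ((n1 : ℝ) - 3) / (3 * ((n1 : ℝ) - 1)) + (r : ℝ) * ((n1 : ℝ) - 2) / (2 * ((n1 : ℝ) - 1))⌋

def q2c (n1 m r : ℕ) : ℝ :=
  (m : ℝ) * n1 * ((n1 : ℝ) - 3) / 3 + (r : ℝ) * n1 * ((n1 : ℝ) - 2) / 2
  - (n1 : ℝ) * ((n1 : ℝ) - 1) * (w2 n1 m r : ℝ)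

def p2c (n1 m r : ℕ) : ℝ := (n1 : ℝ) * ((n1 : ℝ) - 1) - q2c n1 m r

def w3 (m : ℕ) : ℕ := m / 3

def q3c (n n1 m : ℕ) : ℝ := (m : ℝ) * n * n1 / 3 - (n : ℝ) * n1 * (w3 m : ℝ)

def p3c (n n1 m : ℕ) : ℝ := (n : ℝ) * n1 - q3c n n1 m

/-- Lower bound `LBW3` for a three-level initial design (Theorem 3). -/
def LBW33 (n n1 m r : ℕ) (wd0 : ℝ) : ℝ :=
  Cconst n n1 m r + ((n : ℝ) ^ 2 / ((n : ℝ) + n1) ^ 2) * ((3 : ℝ) / 2) ^ r * wd0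
  + (1 / ((n : ℝ) + n1) ^ 2) * ((23 : ℝ) / 18) ^ (m + r) *
      (p2c n1 m r * ((27 : ℝ) / 23) ^ w2 n1 m r + q2c n1 m r * ((27 : ℝ) / 23) ^ (w2 n1 m r + 1)
       + 2 * (p3c n n1 m * ((27 : ℝ) / 23) ^ w3 m + q3c n n1 m * ((27 : ℝ) / 23) ^ (w3 m + 1)))

/-- Lower bound of Theorem 4 for a mixed-level initial design. -/
def LBW3b1 (n n1 m1 m2 r : ℕ) (wd0 : ℝ) : ℝ :=
  Cconst n n1 (m1 + m2) (r + 1) + ((n : ℝ) ^ 2 / ((n : ℝ) + n1) ^ 2) * ((3 : ℝ) / 2) ^ (r + 1) * wd0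
  + (1 / ((n : ℝ) + n1) ^ 2) * ((5 : ℝ) / 4) ^ m1 * ((23 : ℝ) / 18) ^ (m2 + r) *
      ((3 : ℝ) / 2 * T1c n1 m1 m2 r + 2 * ((5 : ℝ) / 4) * T2c n n1 m1 m2)

/-- Lower bound of Theorem 4 for a two-level initial design. -/
def LBW3b2 (n n1 m r : ℕ) (wd0 : ℝ) : ℝ :=
  Cconst n n1 m (r + 1) + ((n : ℝ) ^ 2 / ((n : ℝ) + n1) ^ 2) * ((3 : ℝ) / 2) ^ (r + 1) * wd0
  + (1 / ((n : ℝ) + n1) ^ 2) * ((5 : ℝ) / 4) ^ m * ((23 : ℝ) / 18) ^ r *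
      ((3 : ℝ) / 2 * T1pc n1 m r +
        2 * ((5 : ℝ) / 4) * (p1c n n1 m * ((6 : ℝ) / 5) ^ w1 m + q1c n n1 m * ((6 : ℝ) / 5) ^ (w1 m + 1)))

/-- Lower bound of Theorem 4 for a three-level initial design. -/
def LBW3b3 (n n1 m r : ℕ) (wd0 : ℝ) : ℝ :=
  Cconst n n1 m (r + 1) + ((n : ℝ) ^ 2 / ((n : ℝ) + n1) ^ 2) * ((3 : ℝ) / 2) ^ (r + 1) * wd0
  + (1 / ((n : ℝ) + n1) ^ 2) * ((23 : ℝ) / 18) ^ (m + r) *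
      ((3 : ℝ) / 2 * (p2c n1 m r * ((27 : ℝ) / 23) ^ w2 n1 m r
                      + q2c n1 m r * ((27 : ℝ) / 23) ^ (w2 n1 m r + 1))
       + 2 * ((5 : ℝ) / 4) * (p3c n n1 m * ((27 : ℝ) / 23) ^ w3 m
                              + q3c n n1 m * ((27 : ℝ) / 23) ^ (w3 m + 1)))

def phi1B (n1 m1 m2 r : ℕ) : ℝ :=
  aa * ((m1 : ℝ) + 1) * ((n1 : ℝ) - 2) / (2 * ((n1 : ℝ) - 1))
  + bb * m2 * ((n1 : ℝ) - 3) / (3 * ((n1 : ℝ) - 1))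
  + bb * r * ((n1 : ℝ) - 2) / (2 * ((n1 : ℝ) - 1))

def phi2B (m1 m2 : ℕ) : ℝ := aa * ((m1 : ℝ) + 1) / 2 + bb * m2 / 3

def T1Bc (n1 m1 m2 r : ℕ) : ℝ := (n1 : ℝ) * ((n1 : ℝ) - 1) * Real.exp (phi1B n1 m1 m2 r)

def T2Bc (n n1 m1 m2 : ℕ) : ℝ := (n : ℝ) * (n1 : ℝ) * Real.exp (phi2B m1 m2)

/-- Lower bound `LBW3B` (Theorem 5). -/
def LBW3B (n n1 m1 m2 r : ℕ) (wd0 : ℝ) : ℝ :=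
  Cconst n n1 (m1 + m2) (r + 2) + ((n : ℝ) ^ 2 / ((n : ℝ) + n1) ^ 2) * ((3 : ℝ) / 2) ^ (r + 2) * wd0
  + (1 / ((n : ℝ) + n1) ^ 2) * ((5 : ℝ) / 4) ^ (m1 + 1) * ((23 : ℝ) / 18) ^ (m2 + r) *
      ((3 : ℝ) / 2 * T1Bc n1 m1 m2 r + 2 * ((5 : ℝ) / 4) * T2Bc n n1 m1 m2)

def psi1 (n1 m1 m2 r : ℕ) : ℤ :=
  ⌊((m1 : ℝ) * ((n1 : ℝ) - 2) / 2 + (m2 : ℝ) * ((n1 : ℝ) - 3) / 3 + (r : ℝ) * ((n1 : ℝ) - 2) / 2) /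
      ((n1 : ℝ) - 1)⌋

def eta1 (n1 m1 m2 r : ℕ) : ℝ :=
  (m1 : ℝ) * n1 * ((n1 : ℝ) - 2) / 2 + (m2 : ℝ) * n1 * ((n1 : ℝ) - 3) / 3
  + (r : ℝ) * n1 * ((n1 : ℝ) - 2) / 2 - (n1 : ℝ) * ((n1 : ℝ) - 1) * (psi1 n1 m1 m2 r : ℝ)

def zeta1 (n1 m1 m2 r : ℕ) : ℝ := (n1 : ℝ) * ((n1 : ℝ) - 1) - eta1 n1 m1 m2 r

def psi2 (m1 m2 : ℕ) : ℤ := ⌊(m1 : ℝ) / 2 + (m2 : ℝ) / 3⌋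

def eta2 (n n1 m1 m2 : ℕ) : ℝ :=
  (m1 : ℝ) * n * n1 / 2 + (m2 : ℝ) * n * n1 / 3 - (n : ℝ) * n1 * (psi2 m1 m2 : ℝ)

def zeta2 (n n1 m1 m2 : ℕ) : ℝ := (n : ℝ) * n1 - eta2 n n1 m1 m2

def Q1c (n1 m1 m2 r : ℕ) : ℝ :=
  zeta1 n1 m1 m2 r * (psi1 n1 m1 m2 r : ℝ) ^ 2 + eta1 n1 m1 m2 r * ((psi1 n1 m1 m2 r : ℝ) + 1) ^ 2

def Q1pc (n1 m1 m2 r : ℕ) : ℝ :=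
  zeta1 n1 m1 m2 r * ((psi1 n1 m1 m2 r : ℝ) + 1) ^ 2 + eta1 n1 m1 m2 r * ((psi1 n1 m1 m2 r : ℝ) + 2) ^ 2

def Q2c (n n1 m1 m2 : ℕ) : ℝ :=
  zeta2 n n1 m1 m2 * (psi2 m1 m2 : ℝ) ^ 2 + eta2 n n1 m1 m2 * ((psi2 m1 m2 : ℝ) + 1) ^ 2

/-- Lower bound `LBf3` for `E(f_NOD)` of the column augmented design. -/
def LBf3 (n n1 m1 m2 r : ℕ) (ef0 : ℝ) : ℝ :=
  ((m1 : ℝ) + m2) * ((m1 : ℝ) + m2 - 1) / (((m1 : ℝ) + m2 + r) * ((m1 : ℝ) + m2 + r - 1)) * ef0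
  + 1 / (((m1 : ℝ) + m2 + r) * ((m1 : ℝ) + m2 + r - 1)) * (Q1c n1 m1 m2 r + 2 * Q2c n n1 m1 m2)
  + ((n : ℝ) + n1) * ((m1 : ℝ) + m2 + r) / ((m1 : ℝ) + m2 + r - 1)
  - 1 / (((m1 : ℝ) + m2 + r) * ((m1 : ℝ) + m2 + r - 1)) *
    ((n : ℝ) * ((m1 : ℝ) + m2) ^ 2
      - (n : ℝ) ^ 2 * (((m1 : ℝ) + (m1 : ℝ) ^ 2) / 4 + (2 * (m2 : ℝ) + (m2 : ℝ) ^ 2) / 9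
          + (m1 : ℝ) * m2 / 3)
      - (r : ℝ) * m1 * n * ((n : ℝ) - 2)
      - 2 * (r : ℝ) * m2 * n * ((n : ℝ) - 3) / 3
      - (n : ℝ) * ((n : ℝ) - 1) * (r : ℝ) ^ 2
      + (r : ℝ) * ((n : ℝ) ^ 2 + (n1 : ℝ) ^ 2 / 2)
      + ((m1 : ℝ) / 2 + (m2 : ℝ) / 3 + (m1 : ℝ) * ((m1 : ℝ) - 1) / 4
          + ((m2 : ℝ) + r) * ((m2 : ℝ) + r - 1) / 9 + (m1 : ℝ) * ((m2 : ℝ) + r) / 3)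
        * ((n : ℝ) + n1) ^ 2)

/-- Lower bound `LBf3b` for `E(f_NOD)` of the design with one added blocking column. -/
def LBf3b (n n1 m1 m2 r : ℕ) (ef0 : ℝ) : ℝ :=
  ((m1 : ℝ) + m2) * ((m1 : ℝ) + m2 - 1) / (((m1 : ℝ) + m2 + r + 1) * ((m1 : ℝ) + m2 + r)) * ef0
  + 1 / (((m1 : ℝ) + m2 + r + 1) * ((m1 : ℝ) + m2 + r)) * (Q1pc n1 m1 m2 r + 2 * Q2c n n1 m1 m2)
  + ((n : ℝ) + n1) * ((m1 : ℝ) + m2 + r + 1) / ((m1 : ℝ) + m2 + r)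
  - 1 / (((m1 : ℝ) + m2 + r + 1) * ((m1 : ℝ) + m2 + r)) *
    ((n : ℝ) * ((m1 : ℝ) + m2) ^ 2
      - (n : ℝ) ^ 2 * (((m1 : ℝ) + (m1 : ℝ) ^ 2) / 4 + (2 * (m2 : ℝ) + (m2 : ℝ) ^ 2) / 9
          + (m1 : ℝ) * m2 / 3)
      - ((r : ℝ) + 1) * m1 * n * ((n : ℝ) - 2)
      - 2 * ((r : ℝ) + 1) * m2 * n * ((n : ℝ) - 3) / 3
      - (n : ℝ) * ((n : ℝ) - 1) * ((r : ℝ) + 1) ^ 2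
      + (r : ℝ) * ((n : ℝ) ^ 2 + (n1 : ℝ) ^ 2 / 2) + (n : ℝ) ^ 2 + (n1 : ℝ) ^ 2
      + ((m1 : ℝ) / 2 + (m2 : ℝ) / 3 + (m1 : ℝ) * ((m1 : ℝ) + 1) / 4
          + ((m2 : ℝ) + r) * ((m2 : ℝ) + r - 1) / 9 + ((m1 : ℝ) + 1) * ((m2 : ℝ) + r) / 3)
        * ((n : ℝ) + n1) ^ 2)

/-- Lower bound `LBf3B` for `E(f_NOD)` of the design with two added blocking columns. -/
def LBf3B (n n1 m1 m2 r : ℕ) (ef0 : ℝ) : ℝ :=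
  ((m1 : ℝ) + m2) * ((m1 : ℝ) + m2 - 1) / (((m1 : ℝ) + m2 + r + 2) * ((m1 : ℝ) + m2 + r + 1)) * ef0
  + 1 / (((m1 : ℝ) + m2 + r + 2) * ((m1 : ℝ) + m2 + r + 1)) *
      (Q1pc n1 (m1 + 1) m2 r + 2 * Q2c n n1 (m1 + 1) m2)
  + ((n : ℝ) + n1) * ((m1 : ℝ) + m2 + r + 2) / ((m1 : ℝ) + m2 + r + 1)
  - 1 / (((m1 : ℝ) + m2 + r + 2) * ((m1 : ℝ) + m2 + r + 1)) *
    ((n : ℝ) * ((m1 : ℝ) + m2) ^ 2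
      - (n : ℝ) ^ 2 * (((m1 : ℝ) + (m1 : ℝ) ^ 2) / 4 + (2 * (m2 : ℝ) + (m2 : ℝ) ^ 2) / 9
          + (m1 : ℝ) * m2 / 3)
      - ((r : ℝ) + 2) * m1 * n * ((n : ℝ) - 2)
      - 2 * ((r : ℝ) + 2) * m2 * n * ((n : ℝ) - 3) / 3
      - (n : ℝ) * ((n : ℝ) - 1) * ((r : ℝ) + 2) ^ 2
      + ((r : ℝ) + 2) * (n : ℝ) ^ 2 + (3 + (r : ℝ)) * (n1 : ℝ) ^ 2 / 2 + (n : ℝ) * n1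
      + ((m1 : ℝ) / 2 + (m2 : ℝ) / 3 + ((m1 : ℝ) + 2) * ((m1 : ℝ) + 1) / 4
          + ((m2 : ℝ) + r) * ((m2 : ℝ) + r - 1) / 9 + ((m1 : ℝ) + 2) * ((m2 : ℝ) + r) / 3)
        * ((n : ℝ) + n1) ^ 2)

/-
All columns of `D3` are three-level, and for three levels the kernel of the wrap-around
discrepancy only sees whether two entries coincide: it is `3/2` if they do and `23/18` if they
do not. Hence the kernel of two rows is `(23/18)^(m+r) (27/23)^λ`, with `λ` their number of
coincidences, and `WD(D3)` splits into the initial block (which gives `WD(d0)`), the diagonal,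
the pairs of distinct follow-up rows (`λ = V + T`) and the initial/follow-up pairs (`λ = V`,
since `d2` never meets the zero block).

Balance of the columns fixes the sum of `V + T` over the follow-up pairs and of `V` over the
initial/follow-up pairs. As `x ↦ c^x` is convex on `ℤ` for `c > 1`, `c^x` lies above the chord
through `w` and `w + 1`, strictly so outside `{w, w + 1}`. Summing the chord gives the bound
`p c^w + q c^(w+1)`, and equality holds iff every coincidence number is `w` or `w + 1`, which by
the sum constraint means exactly `p` of them equal `w` and `q` equal `w + 1`.
-/

section Secant

variable {c : ℝ}

lemma one_add_mul_sub_one_lt_zpow (hc : 1 < c) {t : ℤ} (h0 : t ≠ 0) (h1 : t ≠ 1) :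
    1 + t * (c - 1) < c ^ t := by
  have hc0 : 0 < c := by linarith
  rcases le_or_gt 2 t with ht | ht
  · obtain ⟨s, rfl⟩ : ∃ s : ℕ, t = s + 1 := ⟨(t - 1).toNat, by omega⟩
    have hs : (0 : ℝ) < s * (c - 1) ^ 2 := by
      have : (1 : ℝ) ≤ s := by exact_mod_cast (show 1 ≤ s by omega)
      nlinarith
    have hpow :=
      mul_le_mul_of_nonneg_right (one_add_mul_sub_le_pow (a := c) (by linarith) s) hc0.le
    rw [zpow_add_one₀ hc0.ne', zpow_natCast]
    push_cast
    nlinarith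
  · obtain ⟨s, rfl⟩ : ∃ s : ℕ, t = -s := ⟨(-t).toNat, by omega⟩
    have hs : (0 : ℝ) < s := by exact_mod_cast (show 0 < s by omega)
    have hinv : 1 - c < c⁻¹ - 1 := by
      have : c⁻¹ - 1 - (1 - c) = (c - 1) ^ 2 / c := by field_simp; ring
      nlinarith [show 0 < (c - 1) ^ 2 / c by positivity]
    calc 1 + ((-s : ℤ) : ℝ) * (c - 1) = 1 + s * (1 - c) := by push_cast; ring
      _ < 1 + s * (c⁻¹ - 1) := by gcongr
      _ ≤ c⁻¹ ^ s := one_add_mul_sub_le_pow (by linarith [inv_pos.2 hc0]) s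
      _ = c ^ (-s : ℤ) := by rw [zpow_neg, zpow_natCast, inv_pow]

lemma zpow_secant_lt (hc : 1 < c) {w x : ℤ} (hw : x ≠ w) (hw1 : x ≠ w + 1) :
    c ^ w + (x - w) * (c ^ (w + 1) - c ^ w) < c ^ x := by
  have hc0 : 0 < c := by linarith
  have hb := one_add_mul_sub_one_lt_zpow hc (t := x - w) (by omega) (by omega)
  have hx : c ^ x = c ^ w * c ^ (x - w) := by rw [← zpow_add₀ hc0.ne', add_sub_cancel]
  rw [hx, zpow_add_one₀ hc0.ne']
  push_cast at hb
  nlinarith [zpow_pos hc0 w]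

lemma zpow_secant_eq (hc : c ≠ 0) {w x : ℤ} (h : x = w ∨ x = w + 1) :
    c ^ w + (x - w) * (c ^ (w + 1) - c ^ w) = c ^ x := by
  rcases h with rfl | rfl
  · simp
  · rw [zpow_add_one₀ hc]; push_cast; ring

lemma zpow_secant_le (hc : 1 < c) (w x : ℤ) :
    c ^ w + (x - w) * (c ^ (w + 1) - c ^ w) ≤ c ^ x := by
  by_cases h : x = w ∨ x = w + 1
  · exact (zpow_secant_eq (by positivity) h).le
  · push Not at h
    exact (zpow_secant_lt hc h.1 h.2).le

end Secant

section SecantSum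

variable {α : Type*} {S : Finset α} {f : α → ℤ} {w : ℤ} {p q : ℝ}

lemma sum_secant_eq (hpq : p + q = #S) (hsum : p * w + q * (w + 1) = ∑ x ∈ S, (f x : ℝ))
    (c : ℝ) :
    ∑ x ∈ S, (c ^ w + (f x - w) * (c ^ (w + 1) - c ^ w)) = p * c ^ w + q * c ^ (w + 1) := by
  rw [sum_add_distrib, ← sum_mul, sum_sub_distrib, ← hsum, sum_const, nsmul_eq_mul, sum_const,
    nsmul_eq_mul, ← hpq]
  ring

lemma card_filter_eq_and_card_filter_eq_add_one_iff [DecidableEq α]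
    (hpq : p + q = #S) (hsum : p * w + q * (w + 1) = ∑ x ∈ S, (f x : ℝ)) :
    ((#{x ∈ S | f x = w} : ℝ) = p ∧ (#{x ∈ S | f x = w + 1} : ℝ) = q) ↔
      ∀ x ∈ S, f x = w ∨ f x = w + 1 := by
  have hdisj : Disjoint {x ∈ S | f x = w} {x ∈ S | f x = w + 1} :=
    disjoint_filter.2 fun x _ h => by omega
  have hcard :
      #{x ∈ S | f x = w ∨ f x = w + 1} = #{x ∈ S | f x = w} + #{x ∈ S | f x = w + 1} := by
    rw [filter_or, card_union_of_disjoint hdisj]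
  constructor
  · rintro ⟨hp, hq⟩
    rw [← card_filter_eq_iff, hcard]
    have : (#{x ∈ S | f x = w} : ℝ) + #{x ∈ S | f x = w + 1} = #S := by rw [hp, hq, hpq]
    exact_mod_cast this
  · intro h
    have hall : #{x ∈ S | f x = w} + #{x ∈ S | f x = w + 1} = #S := by
      rw [← hcard, card_filter_eq_iff.2 h]
    have hf : ∑ x ∈ S, (f x : ℝ) = ∑ x ∈ S, ((w : ℝ) + if f x = w + 1 then 1 else 0) :=
      sum_congr rfl fun x hx => by rcases h x hx with h' | h' <;> simp [h']
    rw [sum_add_distrib, sum_const, nsmul_eq_mul, sum_boole, ← hsum, ← hpq] at hf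
    have hall' : (#{x ∈ S | f x = w} : ℝ) + #{x ∈ S | f x = w + 1} = p + q := by
      rw [hpq]; exact_mod_cast hall
    constructor <;> linarith

variable {c : ℝ}

theorem le_sum_zpow (hc : 1 < c) (hpq : p + q = #S)
    (hsum : p * w + q * (w + 1) = ∑ x ∈ S, (f x : ℝ)) :
    p * c ^ w + q * c ^ (w + 1) ≤ ∑ x ∈ S, c ^ f x := by
  rw [← sum_secant_eq hpq hsum]
  exact sum_le_sum fun x _ => zpow_secant_le hc w (f x)

theorem eq_sum_zpow_iff [DecidableEq α] (hc : 1 < c) (hpq : p + q = #S)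
    (hsum : p * w + q * (w + 1) = ∑ x ∈ S, (f x : ℝ)) :
    p * c ^ w + q * c ^ (w + 1) = ∑ x ∈ S, c ^ f x ↔
      (#{x ∈ S | f x = w} : ℝ) = p ∧ (#{x ∈ S | f x = w + 1} : ℝ) = q := by
  rw [card_filter_eq_and_card_filter_eq_add_one_iff hpq hsum, ← sum_secant_eq hpq hsum,
    sum_eq_sum_iff_of_le fun x _ => zpow_secant_le hc w (f x)]
  refine forall₂_congr fun x _ => ⟨fun h => ?_, ?_⟩
  · by_contra! hne
    exact (zpow_secant_lt hc hne.1 hne.2).ne h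
  · exact zpow_secant_eq (by positivity)

end SecantSum

lemma sum_eq_sum_ne_add_sum_diag {α M : Type*} [Fintype α] [DecidableEq α] [AddCommMonoid M]
    (g : α × α → M) : ∑ p, g p = ∑ p with p.1 ≠ p.2, g p + ∑ a, g (a, a) := by
  rw [← sum_filter_add_sum_filter_not univ (fun p : α × α => p.1 ≠ p.2)]
  simp only [not_not, sum_filter, Fintype.sum_prod_type, sum_ite_eq, mem_univ, if_true]

lemma card_ne_fin (s : ℕ) : (#{p : Fin s × Fin s | p.1 ≠ p.2} : ℝ) = s * (s - 1) := by
  have h := sum_eq_sum_ne_add_sum_diag (fun _ : Fin s × Fin s => (1 : ℝ))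
  simp only [sum_const, card_univ, Fintype.card_prod, Fintype.card_fin, nsmul_eq_mul,
    mul_one] at h
  push_cast at h
  linarith

lemma sum_card_filter_comm {α β : Type*} (s : Finset α) (t : Finset β) (P : α → β → Prop)
    [∀ a b, Decidable (P a b)] : ∑ a ∈ s, #{b ∈ t | P a b} = ∑ b ∈ t, #{a ∈ s | P a b} :=
  sum_card_bipartiteAbove_eq_sum_card_bipartiteBelow P

lemma card_filter_prodMap {α β γ δ : Type*} [Fintype α] [Fintype β] [Fintype γ] [Fintype δ]
    {e₁ : α → γ} {e₂ : β → δ} (he₁ : Function.Injective e₁) (he₂ : Function.Injective e₂)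
    {R₁ : γ → Prop} {R₂ : δ → Prop} [DecidablePred R₁] [DecidablePred R₂]
    (hR₁ : ∀ x, R₁ x ↔ x ∈ Set.range e₁) (hR₂ : ∀ y, R₂ y ↔ y ∈ Set.range e₂)
    (P : γ × δ → Prop) [DecidablePred P] :
    #{p | R₁ p.1 ∧ R₂ p.2 ∧ P p} = #{p : α × β | P (e₁ p.1, e₂ p.2)} := by
  symm
  apply card_nbij (Prod.map e₁ e₂)
  · intro p hp
    simp only [coe_filter, mem_univ, true_and, Set.mem_ofPred_eq, hR₁, hR₂] at hp ⊢
    exact ⟨⟨p.1, rfl⟩, ⟨p.2, rfl⟩, hp⟩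
  · exact (he₁.prodMap he₂).injOn
  · rintro ⟨x, y⟩ hxy
    simp only [coe_filter, mem_univ, true_and, Set.mem_ofPred_eq, hR₁, hR₂] at hxy
    obtain ⟨⟨a, rfl⟩, ⟨b, rfl⟩, h⟩ := hxy
    exact ⟨(a, b), by simpa using h, rfl⟩

lemma le_iff_mem_range_natAdd {n n1 : ℕ} (i : Fin (n + n1)) :
    n ≤ (i : ℕ) ↔ i ∈ Set.range (Fin.natAdd n) := by
  rw [Fin.range_natAdd]; rfl

lemma lt_iff_mem_range_castAdd {n n1 : ℕ} (i : Fin (n + n1)) :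
    (i : ℕ) < n ↔ i ∈ Set.range (Fin.castAdd n1) :=
  ⟨fun h => ⟨⟨i, h⟩, rfl⟩, by rintro ⟨a, rfl⟩; exact a.isLt⟩

lemma lam_comm {N M : ℕ} (x : Fin N → Fin M → ℕ) (i j : Fin N) : lam x i j = lam x j i := by
  simp only [lam, eq_comm]

lemma lam_self {N M : ℕ} (x : Fin N → Fin M → ℕ) (i : Fin N) : lam x i i = M := by
  simp [lam]

lemma mul_sum_card_agree {α β ι : Type*} [Fintype α] [Fintype β] [Fintype ι] (d : α → ι → ℕ)
    (e : β → ι → ℕ) {L : ℕ} (h : ∀ k a, L * #{b | e b k = d a k} = Fintype.card β) :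
    L * ∑ p : α × β, #{k | d p.1 k = e p.2 k} =
      Fintype.card ι * (Fintype.card α * Fintype.card β) := by
  rw [Fintype.sum_prod_type, mul_sum]
  simp_rw [sum_card_filter_comm univ univ (fun b k => d _ k = e b k), mul_sum,
    eq_comm (a := d _ _), h]
  simp [mul_left_comm]

lemma mul_sum_lam_ne {N M : ℕ} (d : Fin N → Fin M → ℕ) {L : ℕ}
    (h : ∀ k a, L * #{b | d b k = d a k} = N) :
    (L : ℝ) * ∑ p : Fin N × Fin N with p.1 ≠ p.2, (lam d p.1 p.2 : ℝ) = M * N * (N - L) := by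
  have hall := mul_sum_card_agree d d (by simpa using h)
  have hsplit := sum_eq_sum_ne_add_sum_diag (fun p : Fin N × Fin N => (lam d p.1 p.2 : ℝ))
  simp only [lam_self, sum_const, card_univ, Fintype.card_fin, nsmul_eq_mul] at hsplit
  simp only [Fintype.card_fin] at hall
  have hall' : (L : ℝ) * ∑ p : Fin N × Fin N, (lam d p.1 p.2 : ℝ) = M * (N * N) := by
    simp only [lam]; exact_mod_cast hall
  rw [hsplit] at hall'
  linear_combination hall'

lemma kernel_of_lt_three {x y : ℕ} (hx : x < 3) (hy : y < 3) :
    (3 : ℝ) / 2 - |uVal 3 x - uVal 3 y| * (1 - |uVal 3 x - uVal 3 y|) =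
      23 / 18 * (27 / 23) ^ (if x = y then 1 else 0) := by
  interval_cases x <;> interval_cases y <;> norm_num [uVal, abs_of_nonneg, abs_of_nonpos]

theorem WD_of_three_level {N M : ℕ} (q : Fin M → ℕ) (x : Fin N → Fin M → ℕ)
    (hq : ∀ k, q k = 3) (hx : ∀ i k, x i k < 3) :
    WD q x = -(4 / 3 : ℝ) ^ M + (23 / 18 : ℝ) ^ M / (N : ℝ) ^ 2 *
      ∑ i, ∑ j, (27 / 23 : ℝ) ^ lam x i j := by
  have hprod : ∀ i j, ∏ k, ((3 : ℝ) / 2 - |uVal (q k) (x i k) - uVal (q k) (x j k)| *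
      (1 - |uVal (q k) (x i k) - uVal (q k) (x j k)|)) = (23 / 18) ^ M * (27 / 23) ^ lam x i j := by
    intro i j
    simp only [hq, kernel_of_lt_three (hx i _) (hx j _), prod_mul_distrib, prod_const, card_univ,
      Fintype.card_fin, prod_pow_eq_pow_sum, sum_boole, Nat.cast_id, lam]
  simp only [WD, hprod, ← mul_sum]
  ring

lemma qfun_zero_of_lt {m2 r k : ℕ} (hk : k < 0 + m2 + r) : qfun 0 m2 r k = 3 := by
  simp only [qfun]; split_ifs <;> omega

lemma IsUType.lt_three {N m : ℕ} {d : Fin N → Fin (0 + m) → ℕ} (hd : IsUType N 0 m d)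
    (i : Fin N) (k : Fin (0 + m)) : d i k < 3 := by
  simpa using (hd k).1 i

lemma IsUType.three_mul_card_eq {N m : ℕ} {d : Fin N → Fin (0 + m) → ℕ} (hd : IsUType N 0 m d)
    (k : Fin (0 + m)) {v : ℕ} (hv : v < 3) : 3 * #{j | d j k = v} = N := by
  simpa using (hd k).2 v hv

lemma IsBalanced.two_mul_card_eq {n1 r : ℕ} {d : Fin n1 → Fin r → ℕ} (hd : IsBalanced n1 r d)
    (k : Fin r) (i : Fin n1) : 2 * #{j | d j k = d i k} = n1 := by
  rcases hd.1 i k with h | h <;> rw [h]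
  exacts [(hd.2 k).1, (hd.2 k).2]

lemma card_append_eq_append {α : Type*} [DecidableEq α] {m r : ℕ} (u v : Fin m → α)
    (u' v' : Fin r → α) :
    #{k | Fin.append u u' k = Fin.append v v' k} = #{k | u k = v k} + #{k | u' k = v' k} := by
  simp only [card_filter, Fin.sum_univ_add, Fin.append_left, Fin.append_right]

section AugDesign

variable {n n1 m r : ℕ} (d0 : Fin n → Fin m → ℕ) (d1 : Fin n1 → Fin m → ℕ)
  (d2 : Fin n1 → Fin r → ℕ)

lemma augDesign_castAdd (a : Fin n) :
    augDesign n n1 m r d0 d1 d2 (Fin.castAdd n1 a) = Fin.append (d0 a) 0 := by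
  ext k
  refine Fin.addCases (fun k => ?_) (fun k => ?_) k <;> simp [augDesign]

lemma augDesign_natAdd (b : Fin n1) :
    augDesign n n1 m r d0 d1 d2 (Fin.natAdd n b) = Fin.append (d1 b) (d2 b) := by
  ext k
  refine Fin.addCases (fun k => ?_) (fun k => ?_) k <;> simp [augDesign]

lemma lam_augDesign_castAdd_castAdd (a b : Fin n) :
    lam (augDesign n n1 m r d0 d1 d2) (Fin.castAdd n1 a) (Fin.castAdd n1 b) =
      lam d0 a b + r := by
  simp [lam, augDesign_castAdd, card_append_eq_append]

lemma lam_augDesign_castAdd_natAdd (h2 : ∀ i k, d2 i k ≠ 0) (a : Fin n) (b : Fin n1) :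
    lam (augDesign n n1 m r d0 d1 d2) (Fin.castAdd n1 a) (Fin.natAdd n b) =
      #{k | d0 a k = d1 b k} := by
  simp [lam, augDesign_castAdd, augDesign_natAdd, card_append_eq_append, eq_comm, h2]

lemma lam_augDesign_natAdd_natAdd (a b : Fin n1) :
    lam (augDesign n n1 m r d0 d1 d2) (Fin.natAdd n a) (Fin.natAdd n b) =
      lam d1 a b + lam d2 a b := by
  simp [lam, augDesign_natAdd, card_append_eq_append]

end AugDesign

section AugDesignWD

variable {n n1 m r : ℕ} {d0 : Fin n → Fin m → ℕ} {d1 : Fin n1 → Fin m → ℕ} {d2 : Fin n1 → Fin r → ℕ}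

lemma augDesign_lt_three (h0 : ∀ a k, d0 a k < 3) (h1 : ∀ b k, d1 b k < 3)
    (h2 : ∀ b k, d2 b k = 1 ∨ d2 b k = 2) (i : Fin (n + n1)) (k : Fin (m + r)) :
    augDesign n n1 m r d0 d1 d2 i k < 3 := by
  simp only [augDesign]
  split_ifs
  · exact h0 _ _
  · omega
  · exact h1 _ _
  · rcases h2 ⟨i - n, by omega⟩ ⟨k - m, by omega⟩ with h | h <;> omega

theorem sum_zpow_lam_augDesign (h2 : ∀ b k, d2 b k = 1 ∨ d2 b k = 2) (c : ℝ) :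
    ∑ i, ∑ j, c ^ lam (augDesign n n1 m r d0 d1 d2) i j =
      c ^ r * ∑ a, ∑ b, c ^ lam d0 a b + n1 * c ^ (m + r) +
        (∑ p : Fin n1 × Fin n1 with p.1 ≠ p.2, c ^ (lam d1 p.1 p.2 + lam d2 p.1 p.2) +
          2 * ∑ p : Fin n × Fin n1, c ^ #{k | d0 p.1 k = d1 p.2 k}) := by
  have h2' : ∀ b k, d2 b k ≠ 0 := fun b k => by rcases h2 b k with h | h <;> omega
  have hFF := sum_eq_sum_ne_add_sum_diag
    (fun p : Fin n1 × Fin n1 => c ^ (lam d1 p.1 p.2 + lam d2 p.1 p.2))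
  simp only [lam_self, sum_const, card_univ, Fintype.card_fin, nsmul_eq_mul,
    Fintype.sum_prod_type] at hFF
  simp only [Fin.sum_univ_add, sum_add_distrib, lam_augDesign_castAdd_castAdd,
    lam_augDesign_natAdd_natAdd, lam_comm _ (Fin.natAdd n _) (Fin.castAdd n1 _),
    lam_augDesign_castAdd_natAdd _ _ _ h2', hFF, Fintype.sum_prod_type, pow_add _ _ r, ← sum_mul]
  rw [sum_comm (γ := Fin n1)]
  ring

theorem WD_augDesign_eq {q : Fin (m + r) → ℕ} {q0 : Fin m → ℕ} (hq : ∀ k, q k = 3)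
    (hq0 : ∀ k, q0 k = 3) (h0 : ∀ a k, d0 a k < 3) (h1 : ∀ b k, d1 b k < 3)
    (h2 : ∀ b k, d2 b k = 1 ∨ d2 b k = 2) (hn : n ≠ 0) :
    WD q (augDesign n n1 m r d0 d1 d2) =
      Cconst n n1 m r + (n : ℝ) ^ 2 / ((n : ℝ) + n1) ^ 2 * (3 / 2) ^ r * WD q0 d0 +
        1 / ((n : ℝ) + n1) ^ 2 * (23 / 18) ^ (m + r) *
          (∑ p : Fin n1 × Fin n1 with p.1 ≠ p.2,
              (27 / 23 : ℝ) ^ (lam d1 p.1 p.2 + lam d2 p.1 p.2) +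
            2 * ∑ p : Fin n × Fin n1, (27 / 23 : ℝ) ^ #{k | d0 p.1 k = d1 p.2 k}) := by
  have hn' : (n : ℝ) ≠ 0 := Nat.cast_ne_zero.2 hn
  have hpow : ∀ s, (23 / 18 : ℝ) ^ s * (27 / 23) ^ s = (3 / 2) ^ s := fun s => by
    rw [← mul_pow]; norm_num
  rw [WD_of_three_level q _ hq (augDesign_lt_three h0 h1 h2), WD_of_three_level q0 d0 hq0 h0,
    sum_zpow_lam_augDesign h2, Cconst]
  simp only [← hpow]
  push_cast
  field_simp
  ring

end AugDesignWD

section Append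

variable {N m1 m2 m r : ℕ} {i j : Fin N}

lemma Vco_of_eq_append {D : Fin N → Fin (m1 + m2 + r) → ℕ} {u v : Fin (m1 + m2) → ℕ}
    {u' v' : Fin r → ℕ} (hi : D i = Fin.append u u') (hj : D j = Fin.append v v') :
    Vco m1 m2 D i j = #{k : Fin (m1 + m2) | m1 ≤ (k : ℕ) ∧ u k = v k} := by
  simp only [Vco, card_filter, Fin.sum_univ_add, hi, hj, Fin.append_left, Fin.append_right,
    Fin.val_castAdd, Fin.val_natAdd, Fin.is_lt, true_and, add_lt_iff_neg_left, not_lt_zero,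
    false_and, and_false, if_false, sum_const_zero, add_zero]

lemma Tco_of_eq_append {D : Fin N → Fin (m + r) → ℕ} {u v : Fin m → ℕ} {u' v' : Fin r → ℕ}
    (hi : D i = Fin.append u u') (hj : D j = Fin.append v v') :
    Tco m D i j = #{k | u' k = v' k ∧ (u' k = 1 ∨ u' k = 2)} := by
  simp only [Tco, card_filter, Fin.sum_univ_add, hi, hj, Fin.append_left, Fin.append_right]
  simp

end Append

section VcoTco

variable {n n1 m r : ℕ} (d0 : Fin n → Fin (0 + m) → ℕ) (d1 : Fin n1 → Fin (0 + m) → ℕ)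
  (d2 : Fin n1 → Fin r → ℕ)

lemma Vco_add_Tco_augDesign_natAdd (h2 : ∀ b k, d2 b k = 1 ∨ d2 b k = 2) (a b : Fin n1) :
    Vco 0 m (augDesign n n1 (0 + m) r d0 d1 d2) (Fin.natAdd n a) (Fin.natAdd n b) +
        Tco (0 + m) (augDesign n n1 (0 + m) r d0 d1 d2) (Fin.natAdd n a) (Fin.natAdd n b) =
      lam d1 a b + lam d2 a b := by
  rw [Vco_of_eq_append (augDesign_natAdd d0 d1 d2 a) (augDesign_natAdd d0 d1 d2 b),
    Tco_of_eq_append (augDesign_natAdd d0 d1 d2 a) (augDesign_natAdd d0 d1 d2 b)]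
  simp [lam, h2 a]

lemma Vco_augDesign_castAdd_natAdd (a : Fin n) (b : Fin n1) :
    Vco 0 m (augDesign n n1 (0 + m) r d0 d1 d2) (Fin.castAdd n1 a) (Fin.natAdd n b) =
      #{k | d0 a k = d1 b k} := by
  rw [Vco_of_eq_append (augDesign_castAdd d0 d1 d2 a) (augDesign_natAdd d0 d1 d2 b)]
  simp

end VcoTco

section Coincidences

variable {n n1 m r : ℕ} {d0 : Fin n → Fin m → ℕ} {d1 : Fin n1 → Fin m → ℕ} {d2 : Fin n1 → Fin r → ℕ}

lemma sum_lam_add_lam_ne (h1 : ∀ k a, 3 * #{b | d1 b k = d1 a k} = n1)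
    (h2 : ∀ k a, 2 * #{b | d2 b k = d2 a k} = n1) :
    ∑ p : Fin n1 × Fin n1 with p.1 ≠ p.2, ((lam d1 p.1 p.2 + lam d2 p.1 p.2 : ℕ) : ℝ) =
      m * n1 * (n1 - 3) / 3 + r * n1 * (n1 - 2) / 2 := by
  have e1 := mul_sum_lam_ne d1 h1
  have e2 := mul_sum_lam_ne d2 h2
  push_cast at e1 e2 ⊢
  rw [sum_add_distrib]
  linear_combination e1 / 3 + e2 / 2

lemma sum_card_agree_cross (h : ∀ k a, 3 * #{b | d1 b k = d0 a k} = n1) :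
    ∑ p : Fin n × Fin n1, (#{k | d0 p.1 k = d1 p.2 k} : ℝ) = m * n * n1 / 3 := by
  have e := mul_sum_card_agree d0 d1 (L := 3) (by simpa using h)
  simp only [Fintype.card_fin] at e
  have e' : (3 : ℝ) * ∑ p : Fin n × Fin n1, (#{k | d0 p.1 k = d1 p.2 k} : ℝ) =
      m * (n * n1) := by
    exact_mod_cast e
  linear_combination e' / 3

end Coincidences

section Bounds

variable {n n1 m r : ℕ} {d0 : Fin n → Fin m → ℕ} {d1 : Fin n1 → Fin m → ℕ} {d2 : Fin n1 → Fin r → ℕ}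

theorem follow_up_bound (h1 : ∀ k a, 3 * #{b | d1 b k = d1 a k} = n1)
    (h2 : ∀ k a, 2 * #{b | d2 b k = d2 a k} = n1) :
    p2c n1 m r * (27 / 23 : ℝ) ^ w2 n1 m r + q2c n1 m r * (27 / 23 : ℝ) ^ (w2 n1 m r + 1) ≤
        ∑ p : Fin n1 × Fin n1 with p.1 ≠ p.2, (27 / 23 : ℝ) ^ (lam d1 p.1 p.2 + lam d2 p.1 p.2) ∧
      (p2c n1 m r * (27 / 23 : ℝ) ^ w2 n1 m r + q2c n1 m r * (27 / 23 : ℝ) ^ (w2 n1 m r + 1) =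
          ∑ p : Fin n1 × Fin n1 with p.1 ≠ p.2, (27 / 23 : ℝ) ^ (lam d1 p.1 p.2 + lam d2 p.1 p.2) ↔
        (#{p : Fin n1 × Fin n1 |
            p.1 ≠ p.2 ∧ ((lam d1 p.1 p.2 + lam d2 p.1 p.2 : ℕ) : ℤ) = w2 n1 m r} : ℝ) = p2c n1 m r ∧
        (#{p : Fin n1 × Fin n1 |
            p.1 ≠ p.2 ∧ ((lam d1 p.1 p.2 + lam d2 p.1 p.2 : ℕ) : ℤ) = w2 n1 m r + 1} : ℝ) =
          q2c n1 m r) := by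
  have hpq : p2c n1 m r + q2c n1 m r = #{p : Fin n1 × Fin n1 | p.1 ≠ p.2} := by
    rw [p2c, card_ne_fin]; ring
  have hsum : p2c n1 m r * w2 n1 m r + q2c n1 m r * (w2 n1 m r + 1) =
      ∑ p : Fin n1 × Fin n1 with p.1 ≠ p.2, (((lam d1 p.1 p.2 + lam d2 p.1 p.2 : ℕ) : ℤ) : ℝ) := by
    simp only [Int.cast_natCast]
    rw [sum_lam_add_lam_ne h1 h2, p2c, q2c]
    ring
  have hc : (1 : ℝ) < 27 / 23 := by norm_num
  have hle := le_sum_zpow hc hpq hsum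
  have heq := eq_sum_zpow_iff hc hpq hsum
  simp only [zpow_natCast, filter_filter] at hle heq
  exact ⟨hle, heq⟩

theorem initial_follow_up_bound (h : ∀ k a, 3 * #{b | d1 b k = d0 a k} = n1) :
    p3c n n1 m * (27 / 23 : ℝ) ^ w3 m + q3c n n1 m * (27 / 23 : ℝ) ^ (w3 m + 1) ≤
        ∑ p : Fin n × Fin n1, (27 / 23 : ℝ) ^ #{k | d0 p.1 k = d1 p.2 k} ∧
      (p3c n n1 m * (27 / 23 : ℝ) ^ w3 m + q3c n n1 m * (27 / 23 : ℝ) ^ (w3 m + 1) =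
          ∑ p : Fin n × Fin n1, (27 / 23 : ℝ) ^ #{k | d0 p.1 k = d1 p.2 k} ↔
        (#{p : Fin n × Fin n1 | #{k | d0 p.1 k = d1 p.2 k} = w3 m} : ℝ) = p3c n n1 m ∧
        (#{p : Fin n × Fin n1 | #{k | d0 p.1 k = d1 p.2 k} = w3 m + 1} : ℝ) = q3c n n1 m) := by
  have hpq : p3c n n1 m + q3c n n1 m = #(univ : Finset (Fin n × Fin n1)) := by
    rw [p3c, card_univ, Fintype.card_prod, Fintype.card_fin, Fintype.card_fin]; push_cast; ring
  have hsum : p3c n n1 m * (w3 m : ℤ) + q3c n n1 m * ((w3 m : ℤ) + 1) =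
      ∑ p : Fin n × Fin n1, (((#{k | d0 p.1 k = d1 p.2 k} : ℕ) : ℤ) : ℝ) := by
    simp only [Int.cast_natCast]
    rw [sum_card_agree_cross h, p3c, q3c]
    ring
  have hc : (1 : ℝ) < 27 / 23 := by norm_num
  have hle := le_sum_zpow hc hpq hsum
  have heq := eq_sum_zpow_iff hc hpq hsum
  simp only [← Nat.cast_add_one, zpow_natCast, Nat.cast_inj] at hle heq
  exact ⟨hle, heq⟩

end Bounds

theorem paper_stmt_2_general (n n1 m1 m2 r : ℕ) (hn : 1 ≤ n)
    (hm1 : m1 = 0)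
    (d0 : Fin n → Fin (m1 + m2) → ℕ) (d1 : Fin n1 → Fin (m1 + m2) → ℕ)
    (d2 : Fin n1 → Fin r → ℕ)
    (hd0 : IsUType n m1 m2 d0) (hd1 : IsUType n1 m1 m2 d1) (hd2 : IsBalanced n1 r d2) :
    WD (fun k : Fin (m1 + m2 + r) => qfun m1 m2 r (k : ℕ)) (augDesign n n1 (m1 + m2) r d0 d1 d2) ≥ LBW33 n n1 m2 r (WD (fun k : Fin (m1 + m2) => qfun m1 m2 0 (k : ℕ)) d0) ∧
    (WD (fun k : Fin (m1 + m2 + r) => qfun m1 m2 r (k : ℕ)) (augDesign n n1 (m1 + m2) r d0 d1 d2) = LBW33 n n1 m2 r (WD (fun k : Fin (m1 + m2) => qfun m1 m2 0 (k : ℕ)) d0) ↔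
      ((((univ.filter (fun p : Fin (n + n1) × Fin (n + n1) =>
            n ≤ (p.1 : ℕ) ∧ n ≤ (p.2 : ℕ) ∧ p.1 ≠ p.2 ∧
            ((Vco m1 m2 (augDesign n n1 (m1 + m2) r d0 d1 d2) p.1 p.2 + Tco (m1 + m2) (augDesign n n1 (m1 + m2) r d0 d1 d2) p.1 p.2 : ℕ) : ℤ) = w2 n1 m2 r)).card : ℝ)
          = p2c n1 m2 r ∧
        ((univ.filter (fun p : Fin (n + n1) × Fin (n + n1) =>
            n ≤ (p.1 : ℕ) ∧ n ≤ (p.2 : ℕ) ∧ p.1 ≠ p.2 ∧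
            ((Vco m1 m2 (augDesign n n1 (m1 + m2) r d0 d1 d2) p.1 p.2 + Tco (m1 + m2) (augDesign n n1 (m1 + m2) r d0 d1 d2) p.1 p.2 : ℕ) : ℤ) = w2 n1 m2 r + 1)).card : ℝ)
          = q2c n1 m2 r) ∧
       (((univ.filter (fun p : Fin (n + n1) × Fin (n + n1) =>
            (p.1 : ℕ) < n ∧ n ≤ (p.2 : ℕ) ∧ Vco m1 m2 (augDesign n n1 (m1 + m2) r d0 d1 d2) p.1 p.2 = w3 m2)).card : ℝ)
          = p3c n n1 m2 ∧
        ((univ.filter (fun p : Fin (n + n1) × Fin (n + n1) =>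
            (p.1 : ℕ) < n ∧ n ≤ (p.2 : ℕ) ∧ Vco m1 m2 (augDesign n n1 (m1 + m2) r d0 d1 d2) p.1 p.2 = w3 m2 + 1)).card : ℝ)
          = q3c n n1 m2))) := by
  subst hm1
  have hK : (0 : ℝ) < 1 / ((n : ℝ) + n1) ^ 2 * (23 / 18) ^ (m2 + r) := by positivity
  obtain ⟨hle2, heq2⟩ := follow_up_bound (m := 0 + m2)
    (fun k a => hd1.three_mul_card_eq k (hd1.lt_three a k)) hd2.two_mul_card_eq
  obtain ⟨hle3, heq3⟩ := initial_follow_up_bound (d0 := d0)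
    (fun k a => hd1.three_mul_card_eq k (hd0.lt_three a k))
  rw [WD_augDesign_eq (fun k => qfun_zero_of_lt (r := r) k.isLt)
    (fun k => qfun_zero_of_lt (m2 := m2) (r := 0) k.isLt) hd0.lt_three hd1.lt_three hd2.1
    (by omega)]
  simp only [card_filter_prodMap (Fin.natAdd_injective _ _) (Fin.natAdd_injective _ _)
    le_iff_mem_range_natAdd le_iff_mem_range_natAdd, card_filter_prodMap (Fin.castAdd_injective _ _)
    (Fin.natAdd_injective _ _) lt_iff_mem_range_castAdd le_iff_mem_range_natAdd,
    (Fin.natAdd_injective _ _).ne_iff, Vco_add_Tco_augDesign_natAdd d0 d1 d2 hd2.1,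
    Vco_augDesign_castAdd_natAdd]
  simp only [Nat.zero_add] at hle2 heq2 hle3 heq3 ⊢
  rw [LBW33, ge_iff_le, add_le_add_iff_left, mul_le_mul_iff_right₀ hK, add_right_inj,
    mul_right_inj' hK.ne', eq_comm, add_eq_add_iff_eq_and_eq hle2 (by linarith),
    mul_right_inj' two_ne_zero, heq2, heq3]
  exact ⟨add_le_add hle2 (by linarith), Iff.rfl⟩

theorem paper_stmt_2 (n n1 m1 m2 r : ℕ) (hn : 1 ≤ n) (hn1 : 2 ≤ n1)
    (hm : 1 ≤ m2) (hm1 : m1 = 0)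
    (d0 : Fin n → Fin (m1 + m2) → ℕ) (d1 : Fin n1 → Fin (m1 + m2) → ℕ)
    (d2 : Fin n1 → Fin r → ℕ)
    (hd0 : IsUType n m1 m2 d0) (hd1 : IsUType n1 m1 m2 d1) (hd2 : IsBalanced n1 r d2) :
    WD (fun k : Fin (m1 + m2 + r) => qfun m1 m2 r (k : ℕ)) (augDesign n n1 (m1 + m2) r d0 d1 d2) ≥ LBW33 n n1 m2 r (WD (fun k : Fin (m1 + m2) => qfun m1 m2 0 (k : ℕ)) d0) ∧
    (WD (fun k : Fin (m1 + m2 + r) => qfun m1 m2 r (k : ℕ)) (augDesign n n1 (m1 + m2) r d0 d1 d2) = LBW33 n n1 m2 r (WD (fun k : Fin (m1 + m2) => qfun m1 m2 0 (k : ℕ)) d0) ↔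
      ((((univ.filter (fun p : Fin (n + n1) × Fin (n + n1) =>
            n ≤ (p.1 : ℕ) ∧ n ≤ (p.2 : ℕ) ∧ p.1 ≠ p.2 ∧
            ((Vco m1 m2 (augDesign n n1 (m1 + m2) r d0 d1 d2) p.1 p.2 + Tco (m1 + m2) (augDesign n n1 (m1 + m2) r d0 d1 d2) p.1 p.2 : ℕ) : ℤ) = w2 n1 m2 r)).card : ℝ)
          = p2c n1 m2 r ∧
        ((univ.filter (fun p : Fin (n + n1) × Fin (n + n1) =>
            n ≤ (p.1 : ℕ) ∧ n ≤ (p.2 : ℕ) ∧ p.1 ≠ p.2 ∧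
            ((Vco m1 m2 (augDesign n n1 (m1 + m2) r d0 d1 d2) p.1 p.2 + Tco (m1 + m2) (augDesign n n1 (m1 + m2) r d0 d1 d2) p.1 p.2 : ℕ) : ℤ) = w2 n1 m2 r + 1)).card : ℝ)
          = q2c n1 m2 r) ∧
       (((univ.filter (fun p : Fin (n + n1) × Fin (n + n1) =>
            (p.1 : ℕ) < n ∧ n ≤ (p.2 : ℕ) ∧ Vco m1 m2 (augDesign n n1 (m1 + m2) r d0 d1 d2) p.1 p.2 = w3 m2)).card : ℝ)
          = p3c n n1 m2 ∧
        ((univ.filter (fun p : Fin (n + n1) × Fin (n + n1) =>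
            (p.1 : ℕ) < n ∧ n ≤ (p.2 : ℕ) ∧ Vco m1 m2 (augDesign n n1 (m1 + m2) r d0 d1 d2) p.1 p.2 = w3 m2 + 1)).card : ℝ)
          = q3c n n1 m2))) :=
  paper_stmt_2_general n n1 m1 m2 r hn hm1 d0 d1 d2 hd0 hd1 hd2

end CAUD

end
end

section
/- Let n ≥ 1, n1 ≥ 2, m1, m2 ≥ 0 with m1+m2 ≥ 1, r ≥ 0, let d0 ∈ U(n; 2^{m1} 3^{m2}), d1 ∈ U(n1; 2^{m1} 3^{m2}), let d2 be a column-balanced n1×r matrix with entries in {1,2}, let D3 be the corresponding column augmented design, and let D3b be D3 with the appended blocking column. Then WD(D3b) ≥ C(r+1) + (n²/(n+n1)²)·(3/2)^{r+1}·WD(d0) + (1/(n+n1)²)·(5/4)^{m1}·(23/18)^{m2+r}·( (3/2)·T1 + 2·(5/4)·T2 ). -/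
open Finset

noncomputable section

namespace CAUD

/-!
On a two- or three-level column the wrap-around kernel `3/2 - |u - u'| (1 - |u - u'|)` only
sees whether the two entries coincide: it is `3/2` on a coincidence and `5/4`, resp. `23/18`,
otherwise. So the product of the kernel over the columns of a pair of rows is a constant times
the exponential of a weighted coincidence count, with weights `a = log (6/5)` and
`b = log (27/23)`.

Split the pairs of rows of `D3b` into blocks. The initial-initial block is `(3/2)^(r+1)` times
the double sum defining `WD(d0)`, and the diagonal of the follow-up block is explicit. On the
initial-follow-up blocks and off the diagonal of the follow-up block, convexity of `exp` gives
`∑ exp ≥ #terms · exp (mean)`; balance of the columns fixes the total coincidence counts, which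
makes these means `φ2` and `φ1`.
-/

theorem sum_sum_fin_add {β : Type*} [AddCommMonoid β] {n n1 : ℕ}
    (P : Fin (n + n1) → Fin (n + n1) → β) :
    ∑ i, ∑ j, P i j =
      ∑ i : Fin n, ∑ j : Fin n, P (Fin.castAdd n1 i) (Fin.castAdd n1 j) +
      ∑ i : Fin n, ∑ j : Fin n1, P (Fin.castAdd n1 i) (Fin.natAdd n j) +
      ∑ i : Fin n1, ∑ j : Fin n, P (Fin.natAdd n i) (Fin.castAdd n1 j) +
      ∑ i : Fin n1, ∑ j : Fin n1, P (Fin.natAdd n i) (Fin.natAdd n j) := by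
  simp only [Fin.sum_univ_add, Finset.sum_add_distrib]
  abel

theorem sum_offDiag_add_sum_diag {ι β : Type*} [DecidableEq ι] [AddCommMonoid β]
    (s : Finset ι) (f : ι → ι → β) :
    ∑ p ∈ s.offDiag, f p.1 p.2 + ∑ i ∈ s, f i i = ∑ i ∈ s, ∑ j ∈ s, f i j := by
  rw [← Finset.sum_diag s (fun p => f p.1 p.2), add_comm,
    ← Finset.sum_union (Finset.disjoint_diag_offDiag s), Finset.diag_union_offDiag,
    Finset.sum_product]

theorem card_offDiag_univ_fin (N : ℕ) :
    (#(univ : Finset (Fin N)).offDiag : ℝ) = N * (N - 1) := by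
  rw [Finset.offDiag_card, Finset.card_univ, Fintype.card_fin, Nat.cast_sub (Nat.le_mul_self N)]
  push_cast
  ring

theorem sum_sum_ite_eq_eq_sum_card_mul_card {ι κ : Type*} [Fintype ι] [Fintype κ]
    {d : ι → ℕ} (e : κ → ℕ) {S : Finset ℕ} (hd : ∀ i, d i ∈ S) :
    ∑ i, ∑ j, (if d i = e j then (1 : ℝ) else 0) =
      ∑ v ∈ S, (#{i | d i = v} : ℝ) * #{j | e j = v} := by
  rw [← Finset.sum_fiberwise_of_maps_to (s := univ) (fun i _ => hd i)]
  apply Finset.sum_congr rfl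
  intro v _
  rw [Finset.sum_congr rfl (g := fun _ => (#{j | e j = v} : ℝ)), Finset.sum_const, nsmul_eq_mul]
  intro i hi
  rw [(Finset.mem_filter.1 hi).2, Finset.natCast_card_filter]
  simp only [eq_comm]

theorem card_mul_exp_le_sum_exp {ι : Type*} {t : Finset ι} {f : ι → ℝ} {μ : ℝ}
    (hμ : ∑ p ∈ t, f p = #t * μ) : #t * Real.exp μ ≤ ∑ p ∈ t, Real.exp (f p) := by
  calc #t * Real.exp μ = ∑ p ∈ t, Real.exp μ * (f p - μ + 1) := by
        rw [← Finset.mul_sum, Finset.sum_add_distrib, Finset.sum_sub_distrib, hμ]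
        simp only [Finset.sum_const, nsmul_eq_mul, mul_one]
        ring
    _ ≤ ∑ p ∈ t, Real.exp (f p) := by
        refine Finset.sum_le_sum fun p _ => ?_
        calc Real.exp μ * (f p - μ + 1) ≤ Real.exp μ * Real.exp (f p - μ) :=
              mul_le_mul_of_nonneg_left (Real.add_one_le_exp _) (Real.exp_pos _).le
          _ = Real.exp (f p) := by rw [← Real.exp_add, add_sub_cancel]

def wdKernel (q x y : ℕ) : ℝ :=
  3 / 2 - |uVal q x - uVal q y| * (1 - |uVal q x - uVal q y|)

def pairKernelSum {N N' M : ℕ} (q : Fin M → ℕ) (x : Fin N → Fin M → ℕ)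
    (y : Fin N' → Fin M → ℕ) : ℝ :=
  ∑ i, ∑ j, ∏ k, wdKernel (q k) (x i k) (y j k)

theorem WD_eq_pairKernelSum {N M : ℕ} (q : Fin M → ℕ) (x : Fin N → Fin M → ℕ) :
    WD q x = -(4 / 3) ^ M + 1 / (N : ℝ) ^ 2 * pairKernelSum q x x := rfl

theorem pairKernelSum_self {N M : ℕ} (q : Fin M → ℕ) (x : Fin N → Fin M → ℕ) :
    pairKernelSum q x x = (N : ℝ) ^ 2 * (WD q x + (4 / 3) ^ M) := by
  rcases eq_or_ne N 0 with rfl | hN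
  · simp [pairKernelSum]
  · rw [WD_eq_pairKernelSum]
    field_simp
    ring

@[simp]
theorem wdKernel_self (q x : ℕ) : wdKernel q x x = 3 / 2 := by simp [wdKernel]

theorem wdKernel_comm (q x y : ℕ) : wdKernel q x y = wdKernel q y x := by
  rw [wdKernel, wdKernel, abs_sub_comm]

def levelBase (q : ℕ) : ℝ := if q = 2 then 5 / 4 else 23 / 18

def levelWeight (q : ℕ) : ℝ := if q = 2 then aa else bb

theorem levelBase_two : levelBase 2 = 5 / 4 := rfl

theorem levelWeight_two : levelWeight 2 = aa := rfl

theorem levelBase_three : levelBase 3 = 23 / 18 := by simp [levelBase]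

theorem levelWeight_three : levelWeight 3 = bb := by simp [levelWeight]

theorem exp_levelWeight (q : ℕ) : Real.exp (levelWeight q) = 3 / 2 / levelBase q := by
  unfold levelWeight levelBase aa bb
  split_ifs <;> rw [Real.exp_log] <;> norm_num

theorem wdKernel_of_ne {q x y : ℕ} (hq : q = 2 ∨ q = 3) (hx : x < q) (hy : y < q)
    (hxy : x ≠ y) : wdKernel q x y = levelBase q := by
  rcases hq with rfl | rfl <;> interval_cases x <;> interval_cases y <;>
    first
    | exact absurd rfl hxy
    | norm_num [wdKernel, uVal, levelBase, abs_of_nonneg, abs_of_nonpos]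

theorem wdKernel_eq_levelBase_mul_exp {q x y : ℕ} (hq : q = 2 ∨ q = 3) (hx : x < q)
    (hy : y < q) :
    wdKernel q x y = levelBase q * Real.exp (if x = y then levelWeight q else 0) := by
  split_ifs with hxy
  · have : levelBase q ≠ 0 := by unfold levelBase; split_ifs <;> norm_num
    rw [hxy, wdKernel_self, exp_levelWeight]
    field_simp
  · rw [wdKernel_of_ne hq hx hy hxy, Real.exp_zero, mul_one]

theorem wdKernel_two_zero_one : wdKernel 2 0 1 = 5 / 4 :=
  wdKernel_of_ne (by simp) (by simp) (by simp) (by simp)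

theorem wdKernel_three_zero {v : ℕ} (hv : v = 1 ∨ v = 2) : wdKernel 3 0 v = 23 / 18 :=
  wdKernel_of_ne (by simp) (by simp) (by omega) (by omega)

def coincWeight {M : ℕ} (w : Fin M → ℝ) (x y : Fin M → ℕ) : ℝ :=
  ∑ k, if x k = y k then w k else 0

theorem coincWeight_self {M : ℕ} (w : Fin M → ℝ) (x : Fin M → ℕ) :
    coincWeight w x x = ∑ k, w k := by
  simp [coincWeight]

theorem prod_wdKernel_eq {M : ℕ} {q : Fin M → ℕ} (hq : ∀ k, q k = 2 ∨ q k = 3)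
    {x y : Fin M → ℕ} (hx : ∀ k, x k < q k) (hy : ∀ k, y k < q k) :
    ∏ k, wdKernel (q k) (x k) (y k) =
      (∏ k, levelBase (q k)) * Real.exp (coincWeight (fun k => levelWeight (q k)) x y) := by
  simp only [wdKernel_eq_levelBase_mul_exp (hq _) (hx _) (hy _), Finset.prod_mul_distrib,
    coincWeight, Real.exp_sum]

theorem sum_sum_coincWeight {ι κ : Type*} [Fintype ι] [Fintype κ] {M : ℕ} (w : Fin M → ℝ)
    (x : ι → Fin M → ℕ) (y : κ → Fin M → ℕ) :
    ∑ i, ∑ j, coincWeight w (x i) (y j) =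
      ∑ k, w k * ∑ i, ∑ j, if x i k = y j k then (1 : ℝ) else 0 := by
  simp only [coincWeight, Finset.mul_sum, mul_ite, mul_one, mul_zero]
  exact (Finset.sum_congr rfl fun i _ => Finset.sum_comm).trans Finset.sum_comm

section levels

variable {m1 m2 r : ℕ}

theorem qfun_eq_two_or_three (m1 m2 r k : ℕ) : qfun m1 m2 r k = 2 ∨ qfun m1 m2 r k = 3 := by
  unfold qfun; split_ifs <;> simp

theorem qfun_of_lt_add {k : ℕ} (hk : k < m1 + m2) : qfun m1 m2 r k = qfun m1 m2 0 k := by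
  unfold qfun; split_ifs <;> omega

theorem qfun_of_lt {k : ℕ} (hk : k < m1) : qfun m1 m2 r k = 2 := by
  simp [qfun, hk]

theorem qfun_of_le_of_lt {k : ℕ} (h1 : m1 ≤ k) (h2 : k < m1 + m2 + r) : qfun m1 m2 r k = 3 := by
  simp [qfun, h2, not_lt.2 h1]

theorem qfun_add_val (k : Fin m2) : qfun m1 m2 r (m1 + k) = 3 :=
  qfun_of_le_of_lt (by omega) (by omega)

theorem qfun_add_add_val (k : Fin r) : qfun m1 m2 r (m1 + m2 + k) = 3 :=
  qfun_of_le_of_lt (by omega) (by omega)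

theorem qfun_last : qfun m1 m2 r (m1 + m2 + r) = 2 := by
  simp [qfun]

theorem prod_levelBase_qfun :
    ∏ k : Fin (m1 + m2), levelBase (qfun m1 m2 0 k) = (5 / 4) ^ m1 * (23 / 18) ^ m2 := by
  simp only [Fin.prod_univ_add, Fin.val_castAdd, Fin.val_natAdd, qfun_of_lt (Fin.is_lt _),
    qfun_add_val, levelBase_two, levelBase_three, Finset.prod_const, Finset.card_univ,
    Fintype.card_fin]

theorem sum_levelWeight_qfun :
    ∑ k : Fin (m1 + m2), levelWeight (qfun m1 m2 0 k) = m1 * aa + m2 * bb := by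
  simp only [Fin.sum_univ_add, Fin.val_castAdd, Fin.val_natAdd, qfun_of_lt (Fin.is_lt _),
    qfun_add_val, levelWeight_two, levelWeight_three, Finset.sum_const, Finset.card_univ,
    Fintype.card_fin, nsmul_eq_mul]

theorem sum_levelWeight_div_qfun :
    ∑ k : Fin (m1 + m2), levelWeight (qfun m1 m2 0 k) / qfun m1 m2 0 k = phi2 m1 m2 := by
  simp only [Fin.sum_univ_add, Fin.val_castAdd, Fin.val_natAdd, qfun_of_lt (Fin.is_lt _),
    qfun_add_val, levelWeight_two, levelWeight_three, Finset.sum_const, Finset.card_univ,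
    Fintype.card_fin, nsmul_eq_mul, phi2]
  push_cast
  ring

end levels

section designs

variable {N N' m1 m2 : ℕ}

theorem IsUType.lt_qfun {d : Fin N → Fin (m1 + m2) → ℕ} (hd : IsUType N m1 m2 d) (i : Fin N)
    (k : Fin (m1 + m2)) : d i k < qfun m1 m2 0 k := by
  have hk := hd k
  unfold qfun
  split_ifs at hk ⊢ <;> first | exact hk.1 i | omega

theorem IsUType.card_filter {d : Fin N → Fin (m1 + m2) → ℕ} (hd : IsUType N m1 m2 d)
    (k : Fin (m1 + m2)) {v : ℕ} (hv : v < qfun m1 m2 0 k) :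
    (#{i | d i k = v} : ℝ) = N / qfun m1 m2 0 k := by
  have hk := hd k
  unfold qfun at hv ⊢
  split_ifs at hk hv ⊢ <;> try omega
  all_goals rw [eq_div_iff (by norm_num)]; norm_cast; linarith [hk.2 v hv]

theorem IsUType.sum_sum_coincidence {d : Fin N → Fin (m1 + m2) → ℕ}
    {e : Fin N' → Fin (m1 + m2) → ℕ} (hd : IsUType N m1 m2 d) (he : IsUType N' m1 m2 e)
    (k : Fin (m1 + m2)) :
    ∑ i, ∑ j, (if d i k = e j k then (1 : ℝ) else 0) = N * N' / qfun m1 m2 0 k := by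
  rw [sum_sum_ite_eq_eq_sum_card_mul_card _ fun i => Finset.mem_range.2 (hd.lt_qfun i k)]
  have hq : (qfun m1 m2 0 k : ℝ) ≠ 0 := by
    rcases qfun_eq_two_or_three m1 m2 0 k with h | h <;> simp [h]
  rw [Finset.sum_congr rfl fun v hv =>
    by rw [hd.card_filter k (Finset.mem_range.1 hv), he.card_filter k (Finset.mem_range.1 hv)]]
  simp only [Finset.sum_const, Finset.card_range, nsmul_eq_mul]
  field_simp

theorem IsBalanced.sum_sum_coincidence {r : ℕ} {d : Fin N → Fin r → ℕ}
    (hd : IsBalanced N r d) (k : Fin r) :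
    ∑ i, ∑ j, (if d i k = d j k then (1 : ℝ) else 0) = N ^ 2 / 2 := by
  rw [sum_sum_ite_eq_eq_sum_card_mul_card (S := {1, 2}) _ fun i => by simpa using hd.1 i k]
  have h1 : (#{i | d i k = 1} : ℝ) = N / 2 := by
    rw [eq_div_iff (by norm_num)]; norm_cast; linarith [(hd.2 k).1]
  have h2 : (#{i | d i k = 2} : ℝ) = N / 2 := by
    rw [eq_div_iff (by norm_num)]; norm_cast; linarith [(hd.2 k).2]
  rw [Finset.sum_pair (by norm_num), h1, h2]
  ring

end designs

section augmented

variable {n n1 m r : ℕ} (d0 : Fin n → Fin m → ℕ) (d1 : Fin n1 → Fin m → ℕ)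
  (d2 : Fin n1 → Fin r → ℕ)

@[simp]
theorem augDesign_castAdd_castAdd (i : Fin n) (k : Fin m) :
    augDesign n n1 m r d0 d1 d2 (Fin.castAdd n1 i) (Fin.castAdd r k) = d0 i k := by
  simp [augDesign]

@[simp]
theorem augDesign_castAdd_natAdd (i : Fin n) (k : Fin r) :
    augDesign n n1 m r d0 d1 d2 (Fin.castAdd n1 i) (Fin.natAdd m k) = 0 := by
  simp [augDesign]

@[simp]
theorem augDesign_natAdd_castAdd (i : Fin n1) (k : Fin m) :
    augDesign n n1 m r d0 d1 d2 (Fin.natAdd n i) (Fin.castAdd r k) = d1 i k := by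
  simp [augDesign]

@[simp]
theorem augDesign_natAdd_natAdd (i : Fin n1) (k : Fin r) :
    augDesign n n1 m r d0 d1 d2 (Fin.natAdd n i) (Fin.natAdd m k) = d2 i k := by
  simp [augDesign]

end augmented

section blocking

variable {n n1 M : ℕ} (D : Fin (n + n1) → Fin M → ℕ)

@[simp]
theorem appendOne_castSucc (i : Fin (n + n1)) (k : Fin M) :
    appendOne n n1 M D i k.castSucc = D i k := by
  simp [appendOne]

@[simp]
theorem appendOne_castAdd_last (i : Fin n) :
    appendOne n n1 M D (Fin.castAdd n1 i) (Fin.last M) = 0 := by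
  simp [appendOne]

@[simp]
theorem appendOne_natAdd_last (i : Fin n1) :
    appendOne n n1 M D (Fin.natAdd n i) (Fin.last M) = 1 := by
  simp [appendOne]

end blocking

section blocks

variable {n n1 m1 m2 r : ℕ} {d0 : Fin n → Fin (m1 + m2) → ℕ}
  {d1 : Fin n1 → Fin (m1 + m2) → ℕ} {d2 : Fin n1 → Fin r → ℕ}

local notation "D3b" => appendOne n n1 (m1 + m2 + r) (augDesign n n1 (m1 + m2) r d0 d1 d2)

theorem prod_columns_appendOne_augDesign (f : ℕ → ℕ → ℕ → ℝ) (i j : Fin (n + n1)) :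
    ∏ k : Fin (m1 + m2 + r + 1), f (qfun m1 m2 r k) (D3b i k) (D3b j k) =
      (∏ k : Fin (m1 + m2), f (qfun m1 m2 0 k)
        (augDesign n n1 (m1 + m2) r d0 d1 d2 i (Fin.castAdd r k))
        (augDesign n n1 (m1 + m2) r d0 d1 d2 j (Fin.castAdd r k))) *
      (∏ k : Fin r, f 3
        (augDesign n n1 (m1 + m2) r d0 d1 d2 i (Fin.natAdd (m1 + m2) k))
        (augDesign n n1 (m1 + m2) r d0 d1 d2 j (Fin.natAdd (m1 + m2) k))) *
      f 2 (D3b i (Fin.last _)) (D3b j (Fin.last _)) := by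
  rw [Fin.prod_univ_castSucc, Fin.prod_univ_add]
  simp only [appendOne_castSucc, Fin.val_castSucc, Fin.val_castAdd, Fin.val_natAdd,
    Fin.val_last, qfun_of_lt_add (Fin.is_lt _), qfun_add_add_val, qfun_last]

theorem prod_wdKernel_initial_initial (i j : Fin n) :
    ∏ k : Fin (m1 + m2 + r + 1),
        wdKernel (qfun m1 m2 r k) (D3b (Fin.castAdd n1 i) k) (D3b (Fin.castAdd n1 j) k) =
      (3 / 2) ^ (r + 1) *
        ∏ k : Fin (m1 + m2), wdKernel (qfun m1 m2 0 k) (d0 i k) (d0 j k) := by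
  rw [prod_columns_appendOne_augDesign]
  simp only [augDesign_castAdd_castAdd, augDesign_castAdd_natAdd, appendOne_castAdd_last,
    wdKernel_self, Finset.prod_const, Finset.card_univ, Fintype.card_fin]
  ring

theorem prod_wdKernel_initial_followUp (hd2 : ∀ i k, d2 i k = 1 ∨ d2 i k = 2) (i : Fin n)
    (j : Fin n1) :
    ∏ k : Fin (m1 + m2 + r + 1),
        wdKernel (qfun m1 m2 r k) (D3b (Fin.castAdd n1 i) k) (D3b (Fin.natAdd n j) k) =
      5 / 4 * (23 / 18) ^ r *
        ∏ k : Fin (m1 + m2), wdKernel (qfun m1 m2 0 k) (d0 i k) (d1 j k) := by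
  rw [prod_columns_appendOne_augDesign]
  simp only [augDesign_castAdd_castAdd, augDesign_castAdd_natAdd, augDesign_natAdd_castAdd,
    augDesign_natAdd_natAdd, appendOne_castAdd_last, appendOne_natAdd_last,
    wdKernel_three_zero (hd2 j _), wdKernel_two_zero_one, Finset.prod_const, Finset.card_univ,
    Fintype.card_fin]
  ring

theorem prod_wdKernel_followUp_followUp (i j : Fin n1) :
    ∏ k : Fin (m1 + m2 + r + 1),
        wdKernel (qfun m1 m2 r k) (D3b (Fin.natAdd n i) k) (D3b (Fin.natAdd n j) k) =
      3 / 2 * ((∏ k : Fin (m1 + m2), wdKernel (qfun m1 m2 0 k) (d1 i k) (d1 j k)) *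
        ∏ k, wdKernel 3 (d2 i k) (d2 j k)) := by
  rw [prod_columns_appendOne_augDesign]
  simp only [augDesign_natAdd_castAdd, augDesign_natAdd_natAdd, appendOne_natAdd_last,
    wdKernel_self]
  ring

theorem prod_wdKernel_followUp_initial (hd2 : ∀ i k, d2 i k = 1 ∨ d2 i k = 2) (i : Fin n1)
    (j : Fin n) :
    ∏ k : Fin (m1 + m2 + r + 1),
        wdKernel (qfun m1 m2 r k) (D3b (Fin.natAdd n i) k) (D3b (Fin.castAdd n1 j) k) =
      5 / 4 * (23 / 18) ^ r *
        ∏ k : Fin (m1 + m2), wdKernel (qfun m1 m2 0 k) (d0 j k) (d1 i k) := by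
  rw [← prod_wdKernel_initial_followUp hd2]
  exact Finset.prod_congr rfl fun k _ => wdKernel_comm _ _ _

theorem WD_appendOne_augDesign (hd2 : ∀ i k, d2 i k = 1 ∨ d2 i k = 2) :
    WD (fun k : Fin (m1 + m2 + r + 1) => qfun m1 m2 r k) D3b =
      -(4 / 3) ^ (m1 + m2 + r + 1) + 1 / ((n : ℝ) + n1) ^ 2 *
        ((3 / 2) ^ (r + 1) * pairKernelSum (fun k : Fin (m1 + m2) => qfun m1 m2 0 k) d0 d0 +
          2 * (5 / 4 * (23 / 18) ^ r) *
            pairKernelSum (fun k : Fin (m1 + m2) => qfun m1 m2 0 k) d0 d1 +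
          3 / 2 * ∑ i, ∑ j,
            (∏ k : Fin (m1 + m2), wdKernel (qfun m1 m2 0 k) (d1 i k) (d1 j k)) *
              ∏ k, wdKernel 3 (d2 i k) (d2 j k)) := by
  rw [WD_eq_pairKernelSum, pairKernelSum, sum_sum_fin_add]
  simp only [prod_wdKernel_initial_initial, prod_wdKernel_initial_followUp hd2,
    prod_wdKernel_followUp_initial hd2, prod_wdKernel_followUp_followUp, ← Finset.mul_sum]
  rw [Finset.sum_comm (s := univ (α := Fin n1)), pairKernelSum, pairKernelSum]
  push_cast
  ring

end blocks

section bounds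

variable {N N' m1 m2 r : ℕ}

theorem sum_sum_coincWeight_levelWeight {d : Fin N → Fin (m1 + m2) → ℕ}
    {e : Fin N' → Fin (m1 + m2) → ℕ} (hd : IsUType N m1 m2 d) (he : IsUType N' m1 m2 e) :
    ∑ i, ∑ j, coincWeight (fun k => levelWeight (qfun m1 m2 0 k)) (d i) (e j) =
      N * N' * phi2 m1 m2 := by
  rw [sum_sum_coincWeight, ← sum_levelWeight_div_qfun, Finset.mul_sum]
  exact Finset.sum_congr rfl fun k _ => by rw [hd.sum_sum_coincidence he k]; ring

theorem IsBalanced.sum_sum_coincWeight {d : Fin N → Fin r → ℕ} (hd : IsBalanced N r d) :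
    ∑ i, ∑ j, coincWeight (fun _ => bb) (d i) (d j) = r * bb * N ^ 2 / 2 := by
  rw [CAUD.sum_sum_coincWeight]
  simp only [hd.sum_sum_coincidence, Finset.sum_const, Finset.card_univ, Fintype.card_fin,
    nsmul_eq_mul]
  ring

theorem pairKernelSum_ge_T2c {d : Fin N → Fin (m1 + m2) → ℕ}
    {e : Fin N' → Fin (m1 + m2) → ℕ} (hd : IsUType N m1 m2 d) (he : IsUType N' m1 m2 e) :
    (5 / 4) ^ m1 * (23 / 18) ^ m2 * T2c N N' m1 m2 ≤
      pairKernelSum (fun k : Fin (m1 + m2) => qfun m1 m2 0 k) d e := by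
  have hprod : pairKernelSum (fun k : Fin (m1 + m2) => qfun m1 m2 0 k) d e =
      (5 / 4) ^ m1 * (23 / 18) ^ m2 * ∑ p ∈ univ ×ˢ univ,
        Real.exp (coincWeight (fun k => levelWeight (qfun m1 m2 0 k)) (d p.1) (e p.2)) := by
    simp only [pairKernelSum, prod_wdKernel_eq (fun k => qfun_eq_two_or_three m1 m2 0 k)
      (hd.lt_qfun _) (he.lt_qfun _), prod_levelBase_qfun, Finset.sum_product, Finset.mul_sum]
  have hcard : (#(univ ×ˢ univ : Finset (Fin N × Fin N')) : ℝ) = N * N' := by simp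
  rw [hprod, T2c, ← hcard]
  gcongr
  apply card_mul_exp_le_sum_exp
  rw [Finset.sum_product, sum_sum_coincWeight_levelWeight hd he, hcard]

theorem sum_offDiag_coincWeight {d : Fin N → Fin (m1 + m2) → ℕ} {e : Fin N → Fin r → ℕ}
    (hN : 2 ≤ N) (hd : IsUType N m1 m2 d) (he : IsBalanced N r e) :
    ∑ p ∈ (univ : Finset (Fin N)).offDiag,
        (coincWeight (fun k => levelWeight (qfun m1 m2 0 k)) (d p.1) (d p.2) +
          coincWeight (fun _ => bb) (e p.1) (e p.2)) =
      #(univ : Finset (Fin N)).offDiag * phi1 N m1 m2 r := by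
  have htotal := sum_offDiag_add_sum_diag univ fun i j =>
    coincWeight (fun k => levelWeight (qfun m1 m2 0 k)) (d i) (d j) +
      coincWeight (fun _ => bb) (e i) (e j)
  simp only [coincWeight_self, sum_levelWeight_qfun, Finset.sum_add_distrib,
    sum_sum_coincWeight_levelWeight hd hd, he.sum_sum_coincWeight] at htotal
  have hN1 : (N : ℝ) - 1 ≠ 0 := by
    have : (2 : ℝ) ≤ N := by exact_mod_cast hN
    linarith
  simp only [Finset.sum_const, Finset.card_univ, Fintype.card_fin, nsmul_eq_mul] at htotal
  rw [Finset.sum_add_distrib, card_offDiag_univ_fin, phi1]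
  rw [phi2] at htotal
  field_simp
  linear_combination 6 * htotal

theorem sum_followUp_ge_T1c {d : Fin N → Fin (m1 + m2) → ℕ} {e : Fin N → Fin r → ℕ}
    (hN : 2 ≤ N) (hd : IsUType N m1 m2 d) (he : IsBalanced N r e) :
    N * (3 / 2) ^ (m1 + m2 + r) + (5 / 4) ^ m1 * (23 / 18) ^ (m2 + r) * T1c N m1 m2 r ≤
      ∑ i, ∑ j, (∏ k : Fin (m1 + m2), wdKernel (qfun m1 m2 0 k) (d i k) (d j k)) *
        ∏ k, wdKernel 3 (e i k) (e j k) := by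
  have he3 : ∀ i k, e i k < 3 := fun i k => by rcases he.1 i k with h | h <;> omega
  have hterm : ∀ i j, (∏ k : Fin (m1 + m2), wdKernel (qfun m1 m2 0 k) (d i k) (d j k)) *
      ∏ k, wdKernel 3 (e i k) (e j k) = (5 / 4) ^ m1 * (23 / 18) ^ (m2 + r) *
        Real.exp (coincWeight (fun k => levelWeight (qfun m1 m2 0 k)) (d i) (d j) +
          coincWeight (fun _ => bb) (e i) (e j)) := by
    intro i j
    rw [prod_wdKernel_eq (fun k => qfun_eq_two_or_three m1 m2 0 k) (hd.lt_qfun i)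
        (hd.lt_qfun j), prod_wdKernel_eq (q := fun _ => 3) (by simp) (he3 i) (he3 j),
      prod_levelBase_qfun, Real.exp_add]
    simp only [levelBase_three, levelWeight_three, Finset.prod_const, Finset.card_univ,
      Fintype.card_fin, pow_add]
    ring
  rw [← sum_offDiag_add_sum_diag, add_comm]
  simp only [wdKernel_self, Finset.prod_const, Finset.card_univ, Fintype.card_fin,
    Finset.sum_const, nsmul_eq_mul, ← pow_add]
  gcongr
  simp only [hterm, ← Finset.mul_sum, T1c]
  rw [← card_offDiag_univ_fin]
  gcongr
  exact card_mul_exp_le_sum_exp (sum_offDiag_coincWeight hN hd he)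

end bounds

theorem LBW3b1_eq (n n1 m1 m2 r : ℕ) (wd0 : ℝ) :
    LBW3b1 n n1 m1 m2 r wd0 =
      -(4 / 3) ^ (m1 + m2 + r + 1) + 1 / ((n : ℝ) + n1) ^ 2 *
        ((3 / 2) ^ (r + 1) * (n ^ 2 * (wd0 + (4 / 3) ^ (m1 + m2))) +
          2 * (5 / 4 * (23 / 18) ^ r) * ((5 / 4) ^ m1 * (23 / 18) ^ m2 * T2c n n1 m1 m2) +
          3 / 2 * (n1 * (3 / 2) ^ (m1 + m2 + r) +
            (5 / 4) ^ m1 * (23 / 18) ^ (m2 + r) * T1c n1 m1 m2 r)) := by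
  rw [LBW3b1, Cconst]
  ring

theorem paper_stmt_3_general (n n1 m1 m2 r : ℕ) (hn1 : 2 ≤ n1)
    (d0 : Fin n → Fin (m1 + m2) → ℕ) (d1 : Fin n1 → Fin (m1 + m2) → ℕ)
    (d2 : Fin n1 → Fin r → ℕ)
    (hd0 : IsUType n m1 m2 d0) (hd1 : IsUType n1 m1 m2 d1) (hd2 : IsBalanced n1 r d2) :
    WD (fun k : Fin (m1 + m2 + r + 1) => qfun m1 m2 r (k : ℕ)) (appendOne n n1 (m1 + m2 + r) (augDesign n n1 (m1 + m2) r d0 d1 d2)) ≥ LBW3b1 n n1 m1 m2 r (WD (fun k : Fin (m1 + m2) => qfun m1 m2 0 (k : ℕ)) d0) := by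
  rw [ge_iff_le, WD_appendOne_augDesign hd2.1, pairKernelSum_self, LBW3b1_eq]
  gcongr
  · exact pairKernelSum_ge_T2c hd0 hd1
  · exact sum_followUp_ge_T1c hn1 hd1 hd2

theorem paper_stmt_3 (n n1 m1 m2 r : ℕ) (hn : 1 ≤ n) (hn1 : 2 ≤ n1)
    (hm : 1 ≤ m1 + m2)
    (d0 : Fin n → Fin (m1 + m2) → ℕ) (d1 : Fin n1 → Fin (m1 + m2) → ℕ)
    (d2 : Fin n1 → Fin r → ℕ)
    (hd0 : IsUType n m1 m2 d0) (hd1 : IsUType n1 m1 m2 d1) (hd2 : IsBalanced n1 r d2) :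
    WD (fun k : Fin (m1 + m2 + r + 1) => qfun m1 m2 r (k : ℕ)) (appendOne n n1 (m1 + m2 + r) (augDesign n n1 (m1 + m2) r d0 d1 d2)) ≥ LBW3b1 n n1 m1 m2 r (WD (fun k : Fin (m1 + m2) => qfun m1 m2 0 (k : ℕ)) d0) :=
  paper_stmt_3_general n n1 m1 m2 r hn1 d0 d1 d2 hd0 hd1 hd2

end CAUD

end
end
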